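/- arXiv:2504.14484 — 2 statements merged into one kernel-verified Lean document; each statement's English description precedes it below -/
import Mathlib

section
/- Let P be a potential graph with barrier digraph V, let t ∈ S ⊊ N with T_S ≠ ∅, and let (a,b) be an edge of P with a ∈ S, b ∉ S realizing p_{ab} = min { p_{qr} : q ∈ S, r ∉ S, (q,r) an edge of P }. Then λ°_S = λ^{•t}_S − p_{tt} + p_{ab}. -/
/-!
For an entering tree `T` on `S` with root `q`, `Υ^T = ∑_{(i,j) ∈ T} p_ij - ∑_{i ∈ S ∖ q} p_ii`.
Reversing the arcs on the path from `t` to `q` gives a tree with root `t`, and by symmetry of `p`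
this only changes the second sum, so `Υ^T - p_qq` does not depend on the root. A tree of
`𝓣^{∘q}_S` built from `T` and the arc `(q, r)` has weight `(Υ^T - p_qq) + p_qr`, and the two
summands are minimized independently: the first by rerooting at `t`, giving `λ^{•t}_S - p_tt`,
the second by the edge `(a, b)`.
-/

open scoped Classical

namespace BarrierForests

variable {α : Type*} [Fintype α] [DecidableEq α]

/-- Total weight of a set of arcs. -/
def aweight (v : α → α → ℝ) (A : Finset (α × α)) : ℝ := ∑ a ∈ A, v a.1 a.2

/-- Weight `Υ^A_S` of the arcs of `A` whose tail lies in `S`. -/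
def aweightOn (v : α → α → ℝ) (A : Finset (α × α)) (S : Finset α) : ℝ :=
  ∑ a ∈ A.filter (fun a => a.1 ∈ S), v a.1 a.2

/-- The relation "there is an arc from `i` to `j` in `A`". -/
def arcRel (A : Finset (α × α)) : α → α → Prop := fun i j => (i, j) ∈ A

/-- Entering forest: every vertex has out-degree at most one, and there are no
directed cycles. -/
def IsEForest (A : Finset (α × α)) : Prop :=
  (∀ i j j', (i, j) ∈ A → (i, j') ∈ A → j = j') ∧
  ∀ i, ¬ Relation.TransGen (arcRel A) i i

/-- Roots of a (spanning) entering forest: the vertices with no outgoing arc. -/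
noncomputable def rootSet (A : Finset (α × α)) : Finset α :=
  Finset.univ.filter fun i => ∀ j, (i, j) ∉ A

/-- `𝓕^k`: spanning entering forests of the digraph with arc set `E`
having exactly `k` trees (equivalently, `k` roots). -/
def FSet (E : Finset (α × α)) (k : ℕ) : Set (Finset (α × α)) :=
  {A | A ⊆ E ∧ IsEForest A ∧ (rootSet A).card = k}

/-- The infimum (in `EReal`, so `⊤` for the empty family) of the `w`-weights of the
members of `s`. -/
noncomputable def minW {β : Type*} (s : Set β) (w : β → ℝ) : EReal :=
  sInf ((fun x => (w x : EReal)) '' s)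

/-- `φ^k`: minimum weight of a spanning entering forest with `k` trees. -/
noncomputable def phi (v : α → α → ℝ) (E : Finset (α × α)) (k : ℕ) : EReal :=
  minW (FSet E k) (aweight v)

/-- `F ∈ 𝓕̃^k`: minimal spanning entering forest with `k` trees. -/
def IsMinForest (v : α → α → ℝ) (E : Finset (α × α)) (k : ℕ) (F : Finset (α × α)) : Prop :=
  F ∈ FSet E k ∧ (aweight v F : EReal) = phi v E k

/-- Vertex set of the tree `T^F_i` of the entering forest `F` rooted at `i`:
all vertices from which `i` is reachable. -/
noncomputable def treeVerts (F : Finset (α × α)) (i : α) : Finset α :=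
  Finset.univ.filter fun j => Relation.ReflTransGen (arcRel F) j i

/-- Arc set of the tree `T^F_i`. -/
noncomputable def treeArcs (F : Finset (α × α)) (i : α) : Finset (α × α) :=
  F.filter fun a => a.1 ∈ treeVerts F i

/-- Induced subgraph (restriction) of the arc set `A` on the vertex set `S`. -/
def restrictArcs (A : Finset (α × α)) (S : Finset α) : Finset (α × α) :=
  A.filter fun a => a.1 ∈ S ∧ a.2 ∈ S

/-- `T ∈ 𝓣^{•q}_S`: `T` is an entering tree that is a subgraph of the digraph with
arc set `E`, with vertex set `S` and root `q`. -/
def IsTreeOn (E T : Finset (α × α)) (S : Finset α) (q : α) : Prop :=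
  q ∈ S ∧ T ⊆ E ∧ (∀ a ∈ T, a.1 ∈ S ∧ a.2 ∈ S) ∧
  (∀ i ∈ S, i ≠ q → ∃! j, (i, j) ∈ T) ∧
  (∀ j, (q, j) ∉ T) ∧
  ∀ i ∈ S, Relation.ReflTransGen (arcRel T) i q

/-- `λ^{•q}_S`. -/
noncomputable def lamB (v : α → α → ℝ) (E : Finset (α × α)) (S : Finset α) (q : α) : EReal :=
  minW {T | IsTreeOn E T S q} (aweight v)

/-- `λ^•_S = min_{q ∈ S} λ^{•q}_S`. -/
noncomputable def lamBul (v : α → α → ℝ) (E : Finset (α × α)) (S : Finset α) : EReal :=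
  minW {T | ∃ q ∈ S, IsTreeOn E T S q} (aweight v)

/-- `T ∈ 𝓣^{∘q}_S`: `T` has `|S| + 1` vertices, `T|_S` is an entering tree with vertex
set `S` and root `q`, and the single arc of `T` leaving `S` goes from `q` to the root
`r ∉ S` of `T`. -/
def IsCTreeOn (E T : Finset (α × α)) (S : Finset α) (q : α) : Prop :=
  ∃ r, r ∉ S ∧ ∃ T', IsTreeOn E T' S q ∧ (q, r) ∈ E ∧ T = insert (q, r) T'

/-- `λ^{∘q}_S`. -/
noncomputable def lamC (v : α → α → ℝ) (E : Finset (α × α)) (S : Finset α) (q : α) : EReal :=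
  minW {T | IsCTreeOn E T S q} (aweight v)

/-- `λ^∘_S = min_{q ∈ S} λ^{∘q}_S`. -/
noncomputable def lamCirc (v : α → α → ℝ) (E : Finset (α × α)) (S : Finset α) : EReal :=
  minW {T | ∃ q ∈ S, IsCTreeOn E T S q} (aweight v)

/-- `μ^∘_S`: minimum of `Υ^F_S` over the spanning entering forests `F ∈ 𝓕^∘_S`,
i.e. those in which every vertex of `S` has an outgoing arc. -/
noncomputable def muCirc (v : α → α → ℝ) (E : Finset (α × α)) (S : Finset α) : EReal :=
  minW {A | A ⊆ E ∧ IsEForest A ∧ ∀ i ∈ S, ∃ j, (i, j) ∈ A} fun A => aweightOn v A S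

/-- `G ∈ 𝓡^F_y`: `G` is a descendant of `F` at the root `y`, i.e. `y` is a root of
`F`, the roots of `G` are those of `F` except `y`, `G` induces `T^F_q` on the vertex
set of every tree of `F` other than `T^F_y`, and `G` induces a tree on the vertex set
of `T^F_y`. -/
def IsDescendant (E F G : Finset (α × α)) (y : α) : Prop :=
  y ∈ rootSet F ∧ rootSet G = rootSet F \ {y} ∧
  (∀ q ∈ rootSet G, restrictArcs G (treeVerts F q) = treeArcs F q) ∧
  ∃ a ∈ treeVerts F y, IsTreeOn E (restrictArcs G (treeVerts F y)) (treeVerts F y) a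

/-- A potential graph: a connected weighted undirected graph with a loop at every
vertex.  Edges are recorded as a symmetric reflexive set of ordered pairs, with a
symmetric weight function `p`. -/
structure PotGraph (α : Type*) [Fintype α] [DecidableEq α] where
  p : α → α → ℝ
  edges : Finset (α × α)
  symm_mem : ∀ i j, (i, j) ∈ edges → (j, i) ∈ edges
  loop_mem : ∀ i, (i, i) ∈ edges
  symm_w : ∀ i j, p i j = p j i
  connected : ∀ i j : α, Relation.ReflTransGen (fun a b => (a, b) ∈ edges ∧ a ≠ b) i j

/-- Arc set of the barrier digraph of the potential graph `P`: an arc `(i,j)`, `i ≠ j`,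
for each non-loop edge of `P`. -/
def barcs (P : PotGraph α) : Finset (α × α) := P.edges.filter fun a => a.1 ≠ a.2

/-- Arc weights of the barrier digraph: `v i j = p i j - p i i`. -/
def bw (P : PotGraph α) : α → α → ℝ := fun i j => P.p i j - P.p i i

/-- Weight of a set of undirected edges of `P`. -/
noncomputable def uweight (P : PotGraph α) (T : Finset (Sym2 α)) : ℝ :=
  ∑ e ∈ T, Sym2.lift ⟨P.p, P.symm_w⟩ e

/-- `T ∈ 𝓣_S`: `T` is an undirected tree that is a subgraph of `P` (loops unused)
with vertex set `S`: its edges are non-loop edges of `P` joining vertices of `S`,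
it is connected on `S`, and it has `|S| - 1` edges. -/
def IsUTreeOn (P : PotGraph α) (T : Finset (Sym2 α)) (S : Finset α) : Prop :=
  (∀ e ∈ T, ∃ i j, i ≠ j ∧ e = s(i, j) ∧ (i, j) ∈ P.edges ∧ i ∈ S ∧ j ∈ S) ∧
  (∀ i ∈ S, ∀ j ∈ S, Relation.ReflTransGen (fun a b => s(a, b) ∈ T) i j) ∧
  T.card + 1 = S.card

/-- `ν_S`: minimum weight of an undirected tree on `S` that is a subgraph of `P`. -/
noncomputable def nu (P : PotGraph α) (S : Finset α) : EReal :=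
  minW {T | IsUTreeOn P T S} (uweight P)

/-- The underlying undirected edge set of a set of arcs. -/
def undir (A : Finset (α × α)) : Finset (Sym2 α) := A.image fun a => s(a.1, a.2)

/-- `Tq` is the entering tree (with root `q`, vertex set `S`, subgraph of the barrier
digraph of `P`) corresponding to the undirected tree `T`: it is obtained from `T` by
directing all edges toward `q` and replacing the weight of each arc `(i,j)` by
`v i j = p i j - p i i`. -/
def Corresponds (P : PotGraph α) (Tq : Finset (α × α)) (T : Finset (Sym2 α))
    (S : Finset α) (q : α) : Prop :=
  IsTreeOn (barcs P) Tq S q ∧ undir Tq = T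

open Relation

section MinW

variable {β : Type*} {s s' : Set β} {w w' : β → ℝ}

theorem minW_le {x : β} (hx : x ∈ s) : minW s w ≤ (w x : EReal) :=
  sInf_le ⟨x, hx, rfl⟩

theorem le_minW {c : EReal} (h : ∀ x ∈ s, c ≤ (w x : EReal)) : c ≤ minW s w :=
  le_sInf (by rintro _ ⟨x, hx, rfl⟩; exact h x hx)

theorem minW_eq_add_of_forall_exists (c : ℝ) (hf : ∀ x ∈ s, ∃ y ∈ s', w' y ≤ w x + c)
    (hg : ∀ y ∈ s', ∃ x ∈ s, w x + c ≤ w' y) : minW s' w' = minW s w + c := by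
  apply le_antisymm
  · rw [← EReal.sub_le_iff_le_add (.inl (EReal.coe_ne_bot c)) (.inl (EReal.coe_ne_top c))]
    refine le_minW fun x hx => ?_
    obtain ⟨y, hy, hyx⟩ := hf x hx
    exact EReal.sub_le_of_le_add ((minW_le hy).trans (by exact_mod_cast hyx))
  · refine le_minW fun y hy => ?_
    obtain ⟨x, hx, hxy⟩ := hg y hy
    calc minW s w + c ≤ (w x : EReal) + c := add_le_add_left (minW_le hx) _
      _ ≤ w' y := by exact_mod_cast hxy

end MinW

theorem _root_.EReal.sub_coe_add_coe (x : EReal) (a b : ℝ) : x - a + b = x + ((b - a : ℝ) : EReal) := by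
  induction x using EReal.rec with
  | bot => simp
  | top => simp only [EReal.top_sub_coe, EReal.top_add_coe]
  | coe x => rw [← EReal.coe_sub, ← EReal.coe_add, ← EReal.coe_add]; ring_nf

section Reroot

variable {E T : Finset (α × α)} {S : Finset α} {q t : α}

theorem IsTreeOn.eq_of_mem (h : IsTreeOn E T S q) {i j j' : α} (hj : (i, j) ∈ T)
    (hj' : (i, j') ∈ T) : j = j' := by
  obtain ⟨-, -, hmem, huniq, hroot, -⟩ := h
  by_cases hiq : i = q
  · exact absurd (hiq ▸ hj) (hroot j)
  · exact (huniq i (hmem _ hj).1 hiq).unique hj hj'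

theorem IsTreeOn.not_transGen_self (h : IsTreeOn E T S q) (i : α) :
    ¬ TransGen (arcRel T) i i := by
  suffices ∀ x, ReflTransGen (arcRel T) x q → ¬ TransGen (arcRel T) x x by
    intro hc
    obtain ⟨w, hw, -⟩ := TransGen.head'_iff.mp hc
    exact this i (h.2.2.2.2.2 i (h.2.2.1 _ hw).1) hc
  intro x hx
  induction hx using ReflTransGen.head_induction_on with
  | refl =>
    intro hc
    obtain ⟨w, hw, -⟩ := TransGen.head'_iff.mp hc
    exact h.2.2.2.2.1 w hw
  | head harc _ ih =>
    intro hc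
    obtain ⟨w, hw, hwx⟩ := TransGen.head'_iff.mp hc
    obtain rfl := h.eq_of_mem hw harc
    exact ih (.tail' hwx harc)

theorem IsTreeOn.reflTransGen_total (h : IsTreeOn E T S q) {x y z : α}
    (hxy : ReflTransGen (arcRel T) x y) (hxz : ReflTransGen (arcRel T) x z) :
    ReflTransGen (arcRel T) y z ∨ ReflTransGen (arcRel T) z y := by
  induction hxy with
  | refl => exact .inl hxz
  | tail _ harc ih =>
    rcases ih with hbz | hzb
    · rcases hbz.cases_head with rfl | ⟨w, hw, hwz⟩
      · exact .inr (.single harc)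
      · exact .inl (h.eq_of_mem hw harc ▸ hwz)
    · exact .inr (hzb.tail harc)

theorem IsTreeOn.eq_of_reflTransGen_of_mem (h : IsTreeOn E T S q) {i x x' : α}
    (hx : ReflTransGen (arcRel T) t x) (hxi : (x, i) ∈ T)
    (hx' : ReflTransGen (arcRel T) t x') (hxi' : (x', i) ∈ T) : x = x' := by
  have key : ∀ u u', ReflTransGen (arcRel T) u u' → (u, i) ∈ T → (u', i) ∈ T → u = u' := by
    intro u u' huu' hui hui'
    rcases huu'.cases_head with rfl | ⟨w, hw, hwu'⟩
    · rfl
    · obtain rfl := h.eq_of_mem hw hui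
      exact absurd (.tail' hwu' hui') (h.not_transGen_self w)
  rcases h.reflTransGen_total hx hx' with hxx' | hx'x
  · exact key _ _ hxx' hxi hxi'
  · exact (key _ _ hx'x hxi' hxi).symm

/-- Rerooting at `t`: the arcs on the path from `t` to the old root are reversed. -/
noncomputable def reroot (T : Finset (α × α)) (t : α) : Finset (α × α) :=
  T.image fun a => if ReflTransGen (arcRel T) t a.1 then a.swap else a

theorem mem_reroot {x y : α} :
    (x, y) ∈ reroot T t ↔ ((x, y) ∈ T ∧ ¬ ReflTransGen (arcRel T) t x) ∨
      ((y, x) ∈ T ∧ ReflTransGen (arcRel T) t y) := by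
  simp only [reroot, Finset.mem_image, Prod.exists]
  constructor
  · rintro ⟨u, w, hmem, heq⟩
    split_ifs at heq with hr <;> obtain ⟨rfl, rfl⟩ := Prod.ext_iff.mp heq
    · exact .inr ⟨hmem, hr⟩
    · exact .inl ⟨hmem, hr⟩
  · rintro (⟨hxy, hr⟩ | ⟨hyx, hr⟩)
    · exact ⟨x, y, hxy, by simp [hr]⟩
    · exact ⟨y, x, hyx, by simp [hr]⟩

theorem IsTreeOn.existsUnique_mem_reroot (h : IsTreeOn E T S q) (ht : t ∈ S) {i : α}
    (hi : i ∈ S) (hit : i ≠ t) : ∃! j, (i, j) ∈ reroot T t := by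
  by_cases hr : ReflTransGen (arcRel T) t i
  · obtain ⟨x, htx, hxi⟩ := hr.cases_tail.resolve_left hit
    refine ⟨x, mem_reroot.mpr (.inr ⟨hxi, htx⟩), fun j hj => ?_⟩
    rcases mem_reroot.mp hj with ⟨-, hnr⟩ | ⟨hji, htj⟩
    · exact absurd hr hnr
    · exact h.eq_of_reflTransGen_of_mem htj hji htx hxi
  · have hiq : i ≠ q := fun e => hr (e ▸ h.2.2.2.2.2 t ht)
    obtain ⟨j, hij, -⟩ := h.2.2.2.1 i hi hiq
    refine ⟨j, mem_reroot.mpr (.inl ⟨hij, hr⟩), fun j' hj' => ?_⟩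
    rcases mem_reroot.mp hj' with ⟨hij', -⟩ | ⟨hj'i, htj'⟩
    · exact h.eq_of_mem hij' hij
    · exact absurd (htj'.tail hj'i) hr

theorem IsTreeOn.reflTransGen_reroot (h : IsTreeOn E T S q) (ht : t ∈ S) {i : α}
    (hi : i ∈ S) : ReflTransGen (arcRel (reroot T t)) i t := by
  have reversed : ∀ x, ReflTransGen (arcRel T) t x → ReflTransGen (arcRel (reroot T t)) x t := by
    intro x hx
    induction hx with
    | refl => exact .refl
    | tail htb hbc ih => exact .head (mem_reroot.mpr (.inr ⟨hbc, htb⟩)) ih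
  suffices ∀ x, ReflTransGen (arcRel T) x q → ReflTransGen (arcRel (reroot T t)) x t from
    this i (h.2.2.2.2.2 i hi)
  intro x hx
  induction hx using ReflTransGen.head_induction_on with
  | refl => exact reversed q (h.2.2.2.2.2 t ht)
  | @head u c huc _ ih =>
    by_cases hr : ReflTransGen (arcRel T) t u
    · exact reversed u hr
    · exact .head (mem_reroot.mpr (.inl ⟨huc, hr⟩)) ih

theorem isTreeOn_reroot (hE : ∀ x y, (x, y) ∈ E → (y, x) ∈ E) (h : IsTreeOn E T S q)
    (ht : t ∈ S) : IsTreeOn E (reroot T t) S t := by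
  refine ⟨ht, ?_, ?_, fun i hi hit => h.existsUnique_mem_reroot ht hi hit, ?_,
    fun i hi => h.reflTransGen_reroot ht hi⟩
  · rintro ⟨x, y⟩ hxy
    rcases mem_reroot.mp hxy with ⟨hxy, -⟩ | ⟨hyx, -⟩
    · exact h.2.1 hxy
    · exact hE _ _ (h.2.1 hyx)
  · rintro ⟨x, y⟩ hxy
    rcases mem_reroot.mp hxy with ⟨hxy, -⟩ | ⟨hyx, -⟩
    · exact h.2.2.1 _ hxy
    · exact (h.2.2.1 _ hyx).symm
  · intro j htj
    rcases mem_reroot.mp htj with ⟨-, hnr⟩ | ⟨hjt, htj⟩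
    · exact hnr .refl
    · exact h.not_transGen_self t (.tail' htj hjt)

theorem sum_reroot {M : Type*} [AddCommMonoid M] {f : α → α → M} (hf : ∀ i j, f i j = f j i)
    (T : Finset (α × α)) (t : α) : ∑ a ∈ reroot T t, f a.1 a.2 = ∑ a ∈ T, f a.1 a.2 := by
  rw [reroot, Finset.sum_image]
  · refine Finset.sum_congr rfl fun a _ => ?_
    split_ifs
    · exact hf _ _
    · rfl
  · intro x hx y hy hxy
    simp only at hxy
    split_ifs at hxy with hrx hry hry
    · exact Prod.swap_injective hxy
    · subst hxy
      exact absurd (hrx.tail hx) hry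
    · subst hxy
      exact absurd (hry.tail hy) hrx
    · exact hxy

theorem IsTreeOn.sum_fst {M : Type*} [AddCommMonoid M] (h : IsTreeOn E T S q) (f : α → M) :
    ∑ a ∈ T, f a.1 = ∑ i ∈ S.erase q, f i := by
  refine Finset.sum_bij (fun a _ => a.1) (fun a ha => ?_) (fun a ha a' ha' he => ?_)
    (fun i hi => ?_) fun _ _ => rfl
  · exact Finset.mem_erase.mpr ⟨fun he => h.2.2.2.2.1 a.2 (he ▸ ha), (h.2.2.1 a ha).1⟩
  · exact Prod.ext he (h.eq_of_mem ha (he ▸ ha'))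
  · obtain ⟨hiq, hi⟩ := Finset.mem_erase.mp hi
    obtain ⟨j, hij, -⟩ := h.2.2.2.1 i hi hiq
    exact ⟨(i, j), hij, rfl⟩

end Reroot

section Weights

variable {E T : Finset (α × α)} {S : Finset α} {q : α}

theorem IsTreeOn.aweight_insert (h : IsTreeOn E T S q) (v : α → α → ℝ) {r : α} (hr : r ∉ S) :
    aweight v (insert (q, r) T) = aweight v T + v q r := by
  rw [aweight, Finset.sum_insert fun hqr => hr (h.2.2.1 _ hqr).2, add_comm]
  rfl

theorem IsTreeOn.aweight_bw (P : PotGraph α) (h : IsTreeOn E T S q) :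
    aweight (bw P) T = ∑ a ∈ T, P.p a.1 a.2 - ∑ i ∈ S.erase q, P.p i i := by
  rw [aweight, ← h.sum_fst fun i => P.p i i, ← Finset.sum_sub_distrib]
  rfl

theorem IsTreeOn.aweight_bw_reroot (P : PotGraph α) (hE : ∀ x y, (x, y) ∈ E → (y, x) ∈ E)
    (h : IsTreeOn E T S q) {t : α} (ht : t ∈ S) :
    aweight (bw P) (reroot T t) = aweight (bw P) T - P.p q q + P.p t t := by
  rw [(isTreeOn_reroot hE h ht).aweight_bw, h.aweight_bw, sum_reroot P.symm_w,
    Finset.sum_erase_eq_sub ht, Finset.sum_erase_eq_sub h.1]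
  ring

end Weights

theorem barcs_symm (P : PotGraph α) {x y : α} (hxy : (x, y) ∈ barcs P) : (y, x) ∈ barcs P := by
  obtain ⟨hxy, hne⟩ := Finset.mem_filter.mp hxy
  exact Finset.mem_filter.mpr ⟨P.symm_mem _ _ hxy, hne.symm⟩

theorem statement15_general (P : PotGraph α) (S : Finset α)
    (t : α) (ht : t ∈ S)
    (a b : α) (ha : a ∈ S) (hb : b ∉ S) (hab : (a, b) ∈ P.edges)
    (hmin : ∀ q ∈ S, ∀ r, r ∉ S → (q, r) ∈ P.edges → P.p a b ≤ P.p q r) :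
    lamCirc (bw P) (barcs P) S =
      lamB (bw P) (barcs P) S t - ((P.p t t : ℝ) : EReal) + ((P.p a b : ℝ) : EReal) := by
  have hE : ∀ x y, (x, y) ∈ barcs P → (y, x) ∈ barcs P := fun _ _ => barcs_symm P
  have habE : (a, b) ∈ barcs P := Finset.mem_filter.mpr ⟨hab, fun h : a = b => hb (h ▸ ha)⟩
  rw [EReal.sub_coe_add_coe]
  refine minW_eq_add_of_forall_exists _ (fun T hT => ?_) ?_
  · have hTa := isTreeOn_reroot hE hT ha
    refine ⟨_, ⟨a, ha, b, hb, _, hTa, habE, rfl⟩, ?_⟩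
    rw [hTa.aweight_insert _ hb, hT.aweight_bw_reroot P hE ha, bw]
    linarith
  · rintro _ ⟨q, hq, r, hr, T, hT, hqr, rfl⟩
    refine ⟨_, isTreeOn_reroot hE hT ht, ?_⟩
    rw [hT.aweight_insert _ hr, hT.aweight_bw_reroot P hE ht, bw]
    linarith [hmin q hq r hr (Finset.mem_filter.mp hqr).1]

/-- Assertion 8.  If `t ∈ S ⊊ N`, `𝓣_S ≠ ∅`, and `(a,b)` is an edge
of `P` with `a ∈ S`, `b ∉ S` realizing the minimum of `p q r` over edges from `S` to
its complement, then `λ^∘_S = λ^{•t}_S - p t t + p a b`. -/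
theorem statement15 (P : PotGraph α) (S : Finset α) (hS : S ⊂ Finset.univ)
    (t : α) (ht : t ∈ S) (hne : ∃ T, IsUTreeOn P T S)
    (a b : α) (ha : a ∈ S) (hb : b ∉ S) (hab : (a, b) ∈ P.edges)
    (hmin : ∀ q ∈ S, ∀ r, r ∉ S → (q, r) ∈ P.edges → P.p a b ≤ P.p q r) :
    lamCirc (bw P) (barcs P) S =
      lamB (bw P) (barcs P) S t - ((P.p t t : ℝ) : EReal) + ((P.p a b : ℝ) : EReal) :=
  statement15_general P S t ht a b ha hb hab hmin

end BarrierForests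
end

section
/- Let P be a potential graph with barrier digraph V, and let S ⊊ N be such that T_S ≠ ∅ and P has at least one edge joining a vertex of S to a vertex of N \ S. Then λ°_S − λ^•_S = min { p_{qr} : q ∈ S, r ∉ S, (q,r) an edge of P } − min_{t ∈ S} p_{tt}. -/
open scoped Classical

/-! Every vertex of an entering tree except its root `q` is the tail of exactly one arc, so
its `v`-weight is the `p`-weight of the underlying undirected tree minus `∑_{i ∈ S, i ≠ q} p i i`.
Conversely every undirected tree on `S` can be oriented towards any `q ∈ S` (send each vertex
to a neighbour closer to `q`). Hence `λ^•_S = ν_S - ∑_{i ∈ S} p i i + min_{t ∈ S} p t t`, and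
since the extra arc `(q, r)` of a tree in `𝓣^∘_S` weighs `p q r - p q q`, the term `p q q`
cancels and `λ^∘_S = ν_S - ∑_{i ∈ S} p i i + min p q r`. -/

theorem SimpleGraph.Reachable.exists_adj_dist_lt {V : Type*} {G : SimpleGraph V} {u v : V}
    (h : G.Reachable u v) (huv : u ≠ v) : ∃ w, G.Adj u w ∧ G.dist w v < G.dist u v := by
  obtain ⟨p, hp⟩ := h.exists_walk_length_eq_dist
  cases p with
  | nil => exact absurd rfl huv
  | cons hadj p =>
    refine ⟨_, hadj, ?_⟩
    rw [← hp, SimpleGraph.Walk.length_cons]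
    exact Nat.lt_succ_of_le (SimpleGraph.dist_le p)

namespace BarrierForests

variable {α : Type*}

theorem minW_eq_of_mem {β : Type*} {s : Set β} {w : β → ℝ} {x : β} {c : ℝ} (hx : x ∈ s)
    (hwx : w x = c) (hmin : ∀ y ∈ s, c ≤ w y) : minW s w = c :=
  le_antisymm (hwx ▸ sInf_le ⟨x, hx, rfl⟩)
    (le_sInf <| by rintro _ ⟨y, hy, rfl⟩; exact EReal.coe_le_coe_iff.2 (hmin y hy))

theorem reflTransGen_undir_of_arcRel [DecidableEq α] {A : Finset (α × α)} {i j : α}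
    (h : Relation.ReflTransGen (arcRel A) i j) :
    Relation.ReflTransGen (fun a b => s(a, b) ∈ undir A) i j :=
  Relation.ReflTransGen.mono (fun _ _ hab => Finset.mem_image_of_mem _ hab) _ _ h

theorem reflTransGen_undir_swap [DecidableEq α] {A : Finset (α × α)} {i j : α}
    (h : Relation.ReflTransGen (fun a b => s(a, b) ∈ undir A) i j) :
    Relation.ReflTransGen (fun a b => s(a, b) ∈ undir A) j i := by
  induction h with
  | refl => rfl
  | tail _ hab ih => exact Relation.ReflTransGen.head (by rwa [Sym2.eq_swap]) ih

theorem isTreeOn_image_of_lt [DecidableEq α] {E : Finset (α × α)} {S : Finset α} {q : α}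
    (f : α → α) (d : α → ℕ) (hq : q ∈ S)
    (hf : ∀ i ∈ S, i ≠ q → (i, f i) ∈ E ∧ f i ∈ S ∧ d (f i) < d i) :
    IsTreeOn E ((S.erase q).image fun i => (i, f i)) S q := by
  have hmem : ∀ {i j}, (i, j) ∈ (S.erase q).image (fun i => (i, f i)) ↔
      (i ≠ q ∧ i ∈ S) ∧ f i = j := by
    intro i j
    simp only [Finset.mem_image, Finset.mem_erase, Prod.mk.injEq]
    constructor
    · rintro ⟨i', hi', rfl, rfl⟩
      exact ⟨hi', rfl⟩
    · rintro ⟨hi, rfl⟩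
      exact ⟨i, hi, rfl, rfl⟩
  refine ⟨hq, ?_, ?_, ?_, fun j hqj => (hmem.1 hqj).1.1 rfl, ?_⟩
  · rintro ⟨i, j⟩ hij
    obtain ⟨⟨hiq, hi⟩, rfl⟩ := hmem.1 hij
    exact (hf i hi hiq).1
  · rintro ⟨i, j⟩ hij
    obtain ⟨⟨hiq, hi⟩, rfl⟩ := hmem.1 hij
    exact ⟨hi, (hf i hi hiq).2.1⟩
  · exact fun i hi hiq => ⟨f i, hmem.2 ⟨⟨hiq, hi⟩, rfl⟩, fun j hj => (hmem.1 hj).2.symm⟩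
  · intro i
    induction i using (measure d).wf.induction with
    | h i ih =>
      intro hi
      by_cases hiq : i = q
      · exact hiq ▸ Relation.ReflTransGen.refl
      · obtain ⟨-, hfi, hlt⟩ := hf i hi hiq
        exact Relation.ReflTransGen.head (hmem.2 ⟨⟨hiq, hi⟩, rfl⟩) (ih (f i) hlt hfi)

namespace IsTreeOn

variable {E T : Finset (α × α)} {S : Finset α} {q : α}

theorem image_fst [DecidableEq α] (h : IsTreeOn E T S q) : T.image Prod.fst = S.erase q := by
  ext i
  simp only [Finset.mem_image, Finset.mem_erase]
  constructor
  · rintro ⟨a, ha, rfl⟩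
    exact ⟨fun hq => h.2.2.2.2.1 a.2 (hq ▸ ha), (h.2.2.1 a ha).1⟩
  · rintro ⟨hiq, hiS⟩
    obtain ⟨j, hj, -⟩ := h.2.2.2.1 i hiS hiq
    exact ⟨(i, j), hj, rfl⟩

theorem injOn_fst (h : IsTreeOn E T S q) : Set.InjOn Prod.fst (T : Set (α × α)) := by
  intro a ha b hb hab
  have haq : a.1 ≠ q := fun hq => h.2.2.2.2.1 a.2 (hq ▸ ha)
  obtain ⟨j, -, hu⟩ := h.2.2.2.1 a.1 (h.2.2.1 a ha).1 haq
  exact Prod.ext hab ((hu a.2 ha).trans (hu b.2 (hab ▸ hb)).symm)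

theorem card_add_one (h : IsTreeOn E T S q) : T.card + 1 = S.card := by
  classical
  rw [← Finset.card_image_of_injOn h.injOn_fst, h.image_fst, Finset.card_erase_add_one h.1]

/-- The path from `i` to the root follows the unique outgoing arcs, so it cannot escape a
2-cycle `{i, j}`; yet it must end at `q`, which has no outgoing arc. -/
theorem eq_of_mem_of_swap_mem (h : IsTreeOn E T S q) {i j : α} (hij : (i, j) ∈ T)
    (hji : (j, i) ∈ T) : i = j := by
  by_contra hne
  have hiq : i ≠ q := fun e => h.2.2.2.2.1 j (e ▸ hij)
  have hjq : j ≠ q := fun e => h.2.2.2.2.1 i (e ▸ hji)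
  obtain ⟨_, -, hui⟩ := h.2.2.2.1 i (h.2.2.1 _ hij).1 hiq
  obtain ⟨_, -, huj⟩ := h.2.2.2.1 j (h.2.2.1 _ hji).1 hjq
  have trapped : ∀ y, Relation.ReflTransGen (arcRel T) i y → y = i ∨ y = j := by
    intro y hy
    induction hy with
    | refl => exact Or.inl rfl
    | tail _ harc ih =>
      rcases ih with rfl | rfl
      · exact Or.inr ((hui _ harc).trans (hui _ hij).symm)
      · exact Or.inl ((huj _ harc).trans (huj _ hji).symm)
  rcases trapped q (h.2.2.2.2.2 i (h.2.2.1 _ hij).1) with e | e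
  exacts [hiq e.symm, hjq e.symm]

theorem injOn_sym2 (h : IsTreeOn E T S q) :
    Set.InjOn (fun a : α × α => s(a.1, a.2)) (T : Set (α × α)) := by
  rintro ⟨a₁, a₂⟩ ha ⟨b₁, b₂⟩ hb hs
  rcases Sym2.eq_iff.1 hs with ⟨rfl, rfl⟩ | ⟨rfl, rfl⟩
  · rfl
  · obtain rfl := h.eq_of_mem_of_swap_mem ha hb
    rfl

theorem card_undir [DecidableEq α] (h : IsTreeOn E T S q) : (undir T).card = T.card :=
  Finset.card_image_of_injOn h.injOn_sym2

theorem reflTransGen_undir [DecidableEq α] (h : IsTreeOn E T S q) {i j : α} (hi : i ∈ S)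
    (hj : j ∈ S) :
    Relation.ReflTransGen (fun a b => s(a, b) ∈ undir T) i j :=
  (reflTransGen_undir_of_arcRel (h.2.2.2.2.2 i hi)).trans
    (reflTransGen_undir_swap (reflTransGen_undir_of_arcRel (h.2.2.2.2.2 j hj)))

variable [Fintype α] [DecidableEq α] {P : PotGraph α}

theorem isUTreeOn_undir (h : IsTreeOn (barcs P) T S q) : IsUTreeOn P (undir T) S := by
  refine ⟨?_, fun i hi j hj => h.reflTransGen_undir hi hj, ?_⟩
  · intro e he
    obtain ⟨a, ha, rfl⟩ := Finset.mem_image.1 he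
    obtain ⟨haE, hne⟩ := Finset.mem_filter.1 (h.2.1 ha)
    exact ⟨a.1, a.2, hne, rfl, haE, h.2.2.1 a ha⟩
  · rw [h.card_undir, h.card_add_one]

theorem aweight_bw_s16 (h : IsTreeOn (barcs P) T S q) :
    aweight (bw P) T = uweight P (undir T) - ∑ i ∈ S, P.p i i + P.p q q := by
  have hp : uweight P (undir T) = ∑ a ∈ T, P.p a.1 a.2 := by
    rw [uweight, undir, Finset.sum_image h.injOn_sym2]
    rfl
  have hloops : ∑ a ∈ T, P.p a.1 a.1 = ∑ i ∈ S, P.p i i - P.p q q := by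
    rw [← Finset.sum_image h.injOn_fst (f := fun i => P.p i i), h.image_fst,
      Finset.sum_erase_eq_sub h.1]
  rw [aweight, hp]
  simp only [bw, Finset.sum_sub_distrib, hloops]
  ring

theorem aweight_bw_insert (h : IsTreeOn (barcs P) T S q) (r : α) :
    aweight (bw P) (insert (q, r) T) = uweight P (undir T) - ∑ i ∈ S, P.p i i + P.p q r := by
  rw [aweight, Finset.sum_insert (h.2.2.2.2.1 r), ← aweight, h.aweight_bw_s16, bw]
  ring

end IsTreeOn

variable [Fintype α] [DecidableEq α]

namespace IsUTreeOn

variable {P : PotGraph α} {T : Finset (Sym2 α)} {S : Finset α}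

theorem of_mem (hT : IsUTreeOn P T S) {i j : α} (hij : s(i, j) ∈ T) :
    i ≠ j ∧ (i, j) ∈ P.edges ∧ i ∈ S ∧ j ∈ S := by
  obtain ⟨a, b, hab, he, habE, ha, hb⟩ := hT.1 _ hij
  rcases Sym2.eq_iff.1 he with ⟨rfl, rfl⟩ | ⟨rfl, rfl⟩
  exacts [⟨hab, habE, ha, hb⟩, ⟨hab.symm, P.symm_mem _ _ habE, hb, ha⟩]

theorem exists_corresponds (hT : IsUTreeOn P T S) {q : α} (hq : q ∈ S) :
    ∃ Tq, Corresponds P Tq T S q := by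
  let G := SimpleGraph.fromEdgeSet (T : Set (Sym2 α))
  have hstep : ∀ i ∈ S, i ≠ q → ∃ j, s(i, j) ∈ T ∧ G.dist j q < G.dist i q := by
    intro i hi hiq
    have hreach : G.Reachable i q := (SimpleGraph.reachable_iff_reflTransGen _ _).2 <|
      Relation.ReflTransGen.mono (fun _ _ hab =>
        (SimpleGraph.fromEdgeSet_adj _).2 ⟨hab, (hT.of_mem hab).1⟩) _ _ (hT.2.1 i hi q hq)
    obtain ⟨j, hadj, hdist⟩ := hreach.exists_adj_dist_lt hiq
    exact ⟨j, ((SimpleGraph.fromEdgeSet_adj _).1 hadj).1, hdist⟩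
  choose! f hfT hfdist using hstep
  have htree := isTreeOn_image_of_lt (E := barcs P) f (G.dist · q) hq fun i hi hiq => by
    obtain ⟨hne, hE, -, hfS⟩ := hT.of_mem (hfT i hi hiq)
    exact ⟨Finset.mem_filter.2 ⟨hE, hne⟩, hfS, hfdist i hi hiq⟩
  have hsub : undir ((S.erase q).image fun i => (i, f i)) ⊆ T := by
    intro e he
    obtain ⟨_, harc, rfl⟩ := Finset.mem_image.1 he
    obtain ⟨i, hi', rfl⟩ := Finset.mem_image.1 harc
    obtain ⟨hiq, hi⟩ := Finset.mem_erase.1 hi'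
    exact hfT i hi hiq
  refine ⟨_, htree, Finset.eq_of_subset_of_card_le hsub ?_⟩
  have := hT.2.2
  have := htree.card_add_one
  rw [htree.card_undir]
  omega

end IsUTreeOn

section Extremal

variable (P : PotGraph α) {S : Finset α} {T₀ : Finset (Sym2 α)}

theorem lamBul_eq (hT₀ : IsUTreeOn P T₀ S)
    (hT₀min : ∀ T, IsUTreeOn P T S → uweight P T₀ ≤ uweight P T) {t : α} (ht : t ∈ S)
    (htmin : ∀ s ∈ S, P.p t t ≤ P.p s s) :
    lamBul (bw P) (barcs P) S = ((uweight P T₀ - ∑ i ∈ S, P.p i i + P.p t t : ℝ) : EReal) := by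
  obtain ⟨Tt, htree, hund⟩ := hT₀.exists_corresponds ht
  refine minW_eq_of_mem ⟨t, ht, htree⟩ (by rw [htree.aweight_bw_s16, hund]) ?_
  rintro T ⟨q, hq, hT⟩
  rw [hT.aweight_bw_s16]
  linarith [hT₀min _ hT.isUTreeOn_undir, htmin q hq]

theorem lamCirc_eq (hT₀ : IsUTreeOn P T₀ S)
    (hT₀min : ∀ T, IsUTreeOn P T S → uweight P T₀ ≤ uweight P T) {e : α × α}
    (he : e.1 ∈ S ∧ e.2 ∉ S ∧ e ∈ P.edges)
    (hemin : ∀ f : α × α, f.1 ∈ S ∧ f.2 ∉ S ∧ f ∈ P.edges → P.p e.1 e.2 ≤ P.p f.1 f.2) :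
    lamCirc (bw P) (barcs P) S =
      ((uweight P T₀ - ∑ i ∈ S, P.p i i + P.p e.1 e.2 : ℝ) : EReal) := by
  obtain ⟨he₁, he₂, heE⟩ := he
  obtain ⟨Te, htree, hund⟩ := hT₀.exists_corresponds he₁
  have harc : e ∈ barcs P := Finset.mem_filter.2 ⟨heE, fun h => he₂ (h ▸ he₁)⟩
  refine minW_eq_of_mem ⟨e.1, he₁, e.2, he₂, Te, htree, harc, rfl⟩
    (by rw [htree.aweight_bw_insert, hund]) ?_
  rintro _ ⟨q, hq, r, hr, T, hT, hqr, rfl⟩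
  rw [hT.aweight_bw_insert]
  linarith [hT₀min _ hT.isUTreeOn_undir, hemin (q, r) ⟨hq, hr, (Finset.mem_filter.1 hqr).1⟩]

end Extremal

theorem statement16_general (P : PotGraph α) (S : Finset α)
    (hne : ∃ T, IsUTreeOn P T S)
    (hcross : ∃ e : α × α, e.1 ∈ S ∧ e.2 ∉ S ∧ e ∈ P.edges) :
    lamCirc (bw P) (barcs P) S - lamBul (bw P) (barcs P) S =
      sInf ((fun e : α × α => ((P.p e.1 e.2 : ℝ) : EReal)) ''
          {e : α × α | e.1 ∈ S ∧ e.2 ∉ S ∧ e ∈ P.edges}) -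
        sInf ((fun t => ((P.p t t : ℝ) : EReal)) '' (↑S : Set α)) := by
  obtain ⟨T₀, hT₀, hT₀min⟩ :=
    Set.exists_min_image {T | IsUTreeOn P T S} (uweight P) (Set.toFinite _) hne
  obtain ⟨e, he, hemin⟩ := Set.exists_min_image {e : α × α | e.1 ∈ S ∧ e.2 ∉ S ∧ e ∈ P.edges}
    (fun e => P.p e.1 e.2) (Set.toFinite _) hcross
  obtain ⟨t, ht, htmin⟩ := Set.exists_min_image (↑S : Set α) (fun t => P.p t t)
    (Set.toFinite _) ⟨e.1, he.1⟩
  rw [← minW, ← minW, minW_eq_of_mem he rfl hemin, minW_eq_of_mem ht rfl htmin,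
    lamCirc_eq P hT₀ hT₀min he hemin, lamBul_eq P hT₀ hT₀min ht htmin,
    ← EReal.coe_sub, ← EReal.coe_sub]
  congr 1
  ring

/-- Assertion 9.  If `S ⊊ N`, `𝓣_S ≠ ∅`, and `P` has an edge
joining `S` to its complement, then
`λ^∘_S - λ^•_S = min {p q r : q ∈ S, r ∉ S, (q,r) an edge of P} - min_{t ∈ S} p t t`. -/
theorem statement16 (P : PotGraph α) (S : Finset α) (hS : S ⊂ Finset.univ)
    (hne : ∃ T, IsUTreeOn P T S)
    (hcross : ∃ e : α × α, e.1 ∈ S ∧ e.2 ∉ S ∧ e ∈ P.edges) :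
    lamCirc (bw P) (barcs P) S - lamBul (bw P) (barcs P) S =
      sInf ((fun e : α × α => ((P.p e.1 e.2 : ℝ) : EReal)) ''
          {e : α × α | e.1 ∈ S ∧ e.2 ∉ S ∧ e ∈ P.edges}) -
        sInf ((fun t => ((P.p t t : ℝ) : EReal)) '' (↑S : Set α)) :=
  statement16_general P S hne hcross

end BarrierForests
end
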